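/- arXiv:2411.17635 — 5 statements merged into one kernel-verified Lean document; each statement's English description precedes it below -/
import Mathlib

section
/- Let Ω ⊆ ℝ³ be a bounded open set, let A be C¹ on a neighborhood of the closure of Ω with values in ℝ^{3×3}, and let v ∈ C_c^∞(Ω; ℝ^{3×3}). Then the function t ↦ CS(A + t v) is differentiable at t = 0 and (d/dt)|_{t=0} CS(A + t v) = 4 ∫_Ω ε_{pqr} ( ∂_q A_{Jr} + ε_{JKL} A_{Kq} A_{Lr} ) v_{Jp} dx. -/
open scoped BigOperators

noncomputable section

/-- Euclidean 3-space. -/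
abbrev E3 := EuclideanSpace ℝ (Fin 3)

/-- The Levi-Civita symbol on indices in `Fin 3`. -/
def eps (i j k : Fin 3) : ℝ :=
  ((i.val : ℝ) - j.val) * ((j.val : ℝ) - k.val) * ((k.val : ℝ) - i.val) / 2

/-- Partial derivative in the `q`-th coordinate direction. -/
def pd (q : Fin 3) (f : E3 → ℝ) (x : E3) : ℝ :=
  fderiv ℝ f x (EuclideanSpace.single q 1)

/-- The Chern-Simons functional in coordinates:
`CS(A) = 2 ∫_Ω ε_{pqr} ( A_{Jp} ∂_q A_{Jr} + (2/3) ε_{JKL} A_{Jp} A_{Kq} A_{Lr} ) dx`. -/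
def CS (Ω : Set E3) (A : E3 → Fin 3 → Fin 3 → ℝ) : ℝ :=
  2 * ∫ x in Ω, ∑ p, ∑ q, ∑ r, eps p q r *
    ((∑ J, A x J p * pd q (fun y => A y J r) x) +
      (2 / 3) * ∑ J, ∑ K, ∑ L, eps J K L * A x J p * A x K q * A x L r)

/-! ### Auxiliary material -/

open MeasureTheory

@[simp] lemma eps_000 : eps 0 0 0 = 0 := by norm_num [eps]
@[simp] lemma eps_001 : eps 0 0 1 = 0 := by norm_num [eps]
@[simp] lemma eps_002 : eps 0 0 2 = 0 := by norm_num [eps]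
@[simp] lemma eps_010 : eps 0 1 0 = 0 := by norm_num [eps]
@[simp] lemma eps_011 : eps 0 1 1 = 0 := by norm_num [eps]
@[simp] lemma eps_012 : eps 0 1 2 = 1 := by norm_num [eps]
@[simp] lemma eps_020 : eps 0 2 0 = 0 := by norm_num [eps]
@[simp] lemma eps_021 : eps 0 2 1 = -1 := by norm_num [eps]
@[simp] lemma eps_022 : eps 0 2 2 = 0 := by norm_num [eps]
@[simp] lemma eps_100 : eps 1 0 0 = 0 := by norm_num [eps]
@[simp] lemma eps_101 : eps 1 0 1 = 0 := by norm_num [eps]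
@[simp] lemma eps_102 : eps 1 0 2 = -1 := by norm_num [eps]
@[simp] lemma eps_110 : eps 1 1 0 = 0 := by norm_num [eps]
@[simp] lemma eps_111 : eps 1 1 1 = 0 := by norm_num [eps]
@[simp] lemma eps_112 : eps 1 1 2 = 0 := by norm_num [eps]
@[simp] lemma eps_120 : eps 1 2 0 = 1 := by norm_num [eps]
@[simp] lemma eps_121 : eps 1 2 1 = 0 := by norm_num [eps]
@[simp] lemma eps_122 : eps 1 2 2 = 0 := by norm_num [eps]
@[simp] lemma eps_200 : eps 2 0 0 = 0 := by norm_num [eps]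
@[simp] lemma eps_201 : eps 2 0 1 = 1 := by norm_num [eps]
@[simp] lemma eps_202 : eps 2 0 2 = 0 := by norm_num [eps]
@[simp] lemma eps_210 : eps 2 1 0 = -1 := by norm_num [eps]
@[simp] lemma eps_211 : eps 2 1 1 = 0 := by norm_num [eps]
@[simp] lemma eps_212 : eps 2 1 2 = 0 := by norm_num [eps]
@[simp] lemma eps_220 : eps 2 2 0 = 0 := by norm_num [eps]
@[simp] lemma eps_221 : eps 2 2 1 = 0 := by norm_num [eps]
@[simp] lemma eps_222 : eps 2 2 2 = 0 := by norm_num [eps]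

lemma my_integrableOn {f : E3 → ℝ} {Ω U : Set E3} (hbdd : Bornology.IsBounded Ω)
    (hclos : closure Ω ⊆ U) (hf : ContinuousOn f U) : IntegrableOn f Ω := by
  have h1 : IntegrableOn f (closure Ω) :=
    (hf.mono hclos).integrableOn_compact hbdd.isCompact_closure
  exact h1.mono_set subset_closure

lemma intOn_sum3' {Ω : Set E3} {f : Fin 3 → E3 → ℝ} (h : ∀ i, IntegrableOn (f i) Ω) :
    IntegrableOn (fun x => ∑ i, f i x) Ω :=
  integrable_finset_sum _ fun i _ => h i

lemma integral_pd_zero {F : E3 → ℝ} (hF : ContDiff ℝ 1 F) (hc : HasCompactSupport F)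
    (q : Fin 3) : ∫ x, pd q F x = 0 := by
  have hdiff : Differentiable ℝ F := hF.differentiable one_ne_zero
  have hcont : Continuous fun x => fderiv ℝ F x (EuclideanSpace.single q 1) :=
    ((ContinuousLinearMap.apply ℝ ℝ (EuclideanSpace.single q 1)).continuous.comp
      (hF.continuous_fderiv one_ne_zero))
  have hcs : HasCompactSupport fun x => fderiv ℝ F x (EuclideanSpace.single q 1) :=
    (hc.fderiv (𝕜 := ℝ)).comp_left (g := fun L : E3 →L[ℝ] ℝ => L (EuclideanSpace.single q 1)) rfl
  have h1 : Integrable (fun x => F x) volume := hF.continuous.integrable_of_hasCompactSupport hc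
  have h2 : Integrable (fun x => fderiv ℝ F x (EuclideanSpace.single q 1)) volume :=
    hcont.integrable_of_hasCompactSupport hcs
  have := integral_mul_fderiv_eq_neg_fderiv_mul_of_integrable
    (f := fun _ : E3 => (1:ℝ)) (g := F) (v := EuclideanSpace.single q 1) (μ := volume)
    ?_ ?_ ?_ (fun x _ => differentiableAt_const 1) (fun x _ => hdiff x)
  · simpa [pd, fderiv_const] using this
  · simp [fderiv_const]
  · simpa using h2
  · simpa using h1

lemma ibp_zero {Ω U : Set E3} (hΩ : IsOpen Ω) (hbdd : Bornology.IsBounded Ω) (hU : IsOpen U)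
    (hclos : closure Ω ⊆ U) {a w : E3 → ℝ} (ha : ContDiffOn ℝ 1 a U) (hw : ContDiff ℝ 1 w)
    (hwsupp : HasCompactSupport w) (hwsub : tsupport w ⊆ Ω) (q : Fin 3) :
    ∫ x in Ω, (a x * pd q w x + pd q a x * w x) = 0 := by
  classical
  set g : E3 → ℝ := fun x => if x ∈ U then a x * w x else 0 with hgdef
  have hUsub : tsupport w ⊆ U := hwsub.trans (subset_closure.trans hclos)
  have hgU : ∀ x ∈ U, g =ᶠ[nhds x] fun y => a y * w y := fun x hx =>
    Filter.eventuallyEq_of_mem (hU.mem_nhds hx) (fun y hy => if_pos hy)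
  have hg0 : ∀ x, x ∉ tsupport w → g =ᶠ[nhds x] fun _ => (0:ℝ) := by
    intro x hx
    refine Filter.eventuallyEq_of_mem ((isClosed_tsupport w).isOpen_compl.mem_nhds hx) ?_
    intro y hy
    have hw0 : w y = 0 := image_eq_zero_of_notMem_tsupport hy
    by_cases hyU : y ∈ U <;> simp [hgdef, hyU, hw0]
  have hgC : ContDiff ℝ 1 g := by
    rw [contDiff_iff_contDiffAt]
    intro x
    by_cases hx : x ∈ U
    · have h1 : ContDiffAt ℝ 1 (fun y => a y * w y) x :=
        ((ha x hx).contDiffAt (hU.mem_nhds hx)).mul hw.contDiffAt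
      exact h1.congr_of_eventuallyEq (hgU x hx)
    · have hx' : x ∉ tsupport w := fun h => hx (hUsub h)
      exact contDiffAt_const.congr_of_eventuallyEq (hg0 x hx')
  have hgsupp : HasCompactSupport g := by
    refine HasCompactSupport.intro hwsupp (fun x hx => ?_)
    have hw0 : w x = 0 := image_eq_zero_of_notMem_tsupport hx
    by_cases hxU : x ∈ U <;> simp [hgdef, hxU, hw0]
  have hzero := integral_pd_zero hgC hgsupp q
  have hin : ∀ x ∈ Ω, pd q g x = a x * pd q w x + pd q a x * w x := by
    intro x hx
    have hxU : x ∈ U := hclos (subset_closure hx)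
    have hda : DifferentiableAt ℝ a x :=
      (ha.differentiableOn one_ne_zero).differentiableAt (hU.mem_nhds hxU)
    have hdw : DifferentiableAt ℝ w x := (hw.differentiable one_ne_zero).differentiableAt
    have hfg : fderiv ℝ g x = fderiv ℝ (fun y => a y * w y) x :=
      Filter.EventuallyEq.fderiv_eq (hgU x hxU)
    rw [pd, hfg, fderiv_fun_mul hda hdw]
    simp only [ContinuousLinearMap.add_apply, ContinuousLinearMap.smul_apply, smul_eq_mul, pd]
    ring
  have hout : ∀ x, x ∉ Ω → pd q g x = 0 := by
    intro x hx
    have hx' : x ∉ tsupport w := fun h => hx (hwsub h)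
    have : fderiv ℝ g x = fderiv ℝ (fun _ : E3 => (0:ℝ)) x :=
      Filter.EventuallyEq.fderiv_eq (hg0 x hx')
    simp [pd, this]
  calc ∫ x in Ω, (a x * pd q w x + pd q a x * w x)
      = ∫ x in Ω, pd q g x :=
        setIntegral_congr_fun hΩ.measurableSet (fun x hx => (hin x hx).symm)
    _ = ∫ x, pd q g x := setIntegral_eq_integral_of_forall_compl_eq_zero (fun x hx => hout x hx)
    _ = 0 := hzero

/-- coordinate partial derivative of an entry. -/
def dd (A : E3 → Fin 3 → Fin 3 → ℝ) (q J r : Fin 3) (x : E3) : ℝ := pd q (fun y => A y J r) x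

def P0f (A : E3 → Fin 3 → Fin 3 → ℝ) (x : E3) : ℝ :=
  ∑ p, ∑ q, ∑ r, eps p q r * ((∑ J, A x J p * dd A q J r x) +
    (2 / 3) * ∑ J, ∑ K, ∑ L, eps J K L * A x J p * A x K q * A x L r)

def S1f (A v : E3 → Fin 3 → Fin 3 → ℝ) (x : E3) : ℝ :=
  ∑ p, ∑ q, ∑ r, ∑ J, eps p q r * (v x J p * dd A q J r x)

def S2f (A v : E3 → Fin 3 → Fin 3 → ℝ) (x : E3) : ℝ :=
  ∑ p, ∑ q, ∑ r, ∑ J, eps p q r * (A x J p * dd v q J r x)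

def Spf (A v : E3 → Fin 3 → Fin 3 → ℝ) (x : E3) : ℝ :=
  ∑ p, ∑ q, ∑ r, ∑ J, eps p q r * (dd A q J r x * v x J p)

def Sqf (A v : E3 → Fin 3 → Fin 3 → ℝ) (x : E3) : ℝ :=
  ∑ p, ∑ q, ∑ r, ∑ J, eps p q r * (dd A q J p x * v x J r)

def T1f (A v : E3 → Fin 3 → Fin 3 → ℝ) (x : E3) : ℝ :=
  ∑ p, ∑ q, ∑ r, ∑ J, ∑ K, ∑ L, eps p q r * eps J K L * v x J p * A x K q * A x L r

def T2f (A v : E3 → Fin 3 → Fin 3 → ℝ) (x : E3) : ℝ :=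
  ∑ p, ∑ q, ∑ r, ∑ J, ∑ K, ∑ L, eps p q r * eps J K L * A x J p * v x K q * A x L r

def T3f (A v : E3 → Fin 3 → Fin 3 → ℝ) (x : E3) : ℝ :=
  ∑ p, ∑ q, ∑ r, ∑ J, ∑ K, ∑ L, eps p q r * eps J K L * A x J p * A x K q * v x L r

def Q1f (A v : E3 → Fin 3 → Fin 3 → ℝ) (x : E3) : ℝ :=
  ∑ p, ∑ q, ∑ r, ∑ J, eps p q r * (v x J p * dd v q J r x)

def U1f (A v : E3 → Fin 3 → Fin 3 → ℝ) (x : E3) : ℝ :=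
  ∑ p, ∑ q, ∑ r, ∑ J, ∑ K, ∑ L, eps p q r * eps J K L * A x J p * v x K q * v x L r

def U2f (A v : E3 → Fin 3 → Fin 3 → ℝ) (x : E3) : ℝ :=
  ∑ p, ∑ q, ∑ r, ∑ J, ∑ K, ∑ L, eps p q r * eps J K L * v x J p * A x K q * v x L r

def U3f (A v : E3 → Fin 3 → Fin 3 → ℝ) (x : E3) : ℝ :=
  ∑ p, ∑ q, ∑ r, ∑ J, ∑ K, ∑ L, eps p q r * eps J K L * v x J p * v x K q * A x L r

def V3f (v : E3 → Fin 3 → Fin 3 → ℝ) (x : E3) : ℝ :=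
  ∑ p, ∑ q, ∑ r, ∑ J, ∑ K, ∑ L, eps p q r * eps J K L * v x J p * v x K q * v x L r

def P1f (A v : E3 → Fin 3 → Fin 3 → ℝ) (x : E3) : ℝ :=
  (S1f A v x + S2f A v x) + (2 / 3) * (T1f A v x + (T2f A v x + T3f A v x))

def P2f (A v : E3 → Fin 3 → Fin 3 → ℝ) (x : E3) : ℝ :=
  Q1f A v x + (2 / 3) * (U1f A v x + (U2f A v x + U3f A v x))

def P3f (v : E3 → Fin 3 → Fin 3 → ℝ) (x : E3) : ℝ := (2 / 3) * V3f v x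

def Gf (A v : E3 → Fin 3 → Fin 3 → ℝ) (x : E3) : ℝ :=
  ∑ p, ∑ q, ∑ r, ∑ J, eps p q r *
    (dd A q J r x + ∑ K, ∑ L, eps J K L * A x K q * A x L r) * v x J p

section algebra

variable (A v : E3 → Fin 3 → Fin 3 → ℝ) (x : E3)

set_option maxHeartbeats 2000000 in
lemma expand_poly (t : ℝ) (a b : Fin 3 → Fin 3 → ℝ) (d e : Fin 3 → Fin 3 → Fin 3 → ℝ) :
    ∑ p, ∑ q, ∑ r, eps p q r *
      ((∑ J, (a J p + t * b J p) * (d q J r + t * e q J r)) +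
        (2 / 3) * ∑ J, ∑ K, ∑ L, eps J K L * (a J p + t * b J p) * (a K q + t * b K q) *
          (a L r + t * b L r))
    = (∑ p, ∑ q, ∑ r, eps p q r *
        ((∑ J, a J p * d q J r) + (2 / 3) * ∑ J, ∑ K, ∑ L, eps J K L * a J p * a K q * a L r))
      + t * (((∑ p, ∑ q, ∑ r, ∑ J, eps p q r * (b J p * d q J r))
          + (∑ p, ∑ q, ∑ r, ∑ J, eps p q r * (a J p * e q J r)))
        + (2/3) * ((∑ p, ∑ q, ∑ r, ∑ J, ∑ K, ∑ L, eps p q r * eps J K L * b J p * a K q * a L r)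
          + ((∑ p, ∑ q, ∑ r, ∑ J, ∑ K, ∑ L, eps p q r * eps J K L * a J p * b K q * a L r)
          + (∑ p, ∑ q, ∑ r, ∑ J, ∑ K, ∑ L, eps p q r * eps J K L * a J p * a K q * b L r))))
      + t^2 * ((∑ p, ∑ q, ∑ r, ∑ J, eps p q r * (b J p * e q J r))
        + (2/3) * ((∑ p, ∑ q, ∑ r, ∑ J, ∑ K, ∑ L, eps p q r * eps J K L * a J p * b K q * b L r)
          + ((∑ p, ∑ q, ∑ r, ∑ J, ∑ K, ∑ L, eps p q r * eps J K L * b J p * a K q * b L r)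
          + (∑ p, ∑ q, ∑ r, ∑ J, ∑ K, ∑ L, eps p q r * eps J K L * b J p * b K q * a L r))))
      + t^3 * ((2/3) * ∑ p, ∑ q, ∑ r, ∑ J, ∑ K, ∑ L,
          eps p q r * eps J K L * b J p * b K q * b L r) := by
  simp only [Fin.sum_univ_three, eps_000, eps_001, eps_002, eps_010, eps_011, eps_012, eps_020,
    eps_021, eps_022, eps_100, eps_101, eps_102, eps_110, eps_111, eps_112, eps_120, eps_121,
    eps_122, eps_200, eps_201, eps_202, eps_210, eps_211, eps_212, eps_220, eps_221, eps_222,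
    zero_mul, one_mul, neg_mul, mul_zero, zero_add, add_zero, neg_neg, mul_neg, mul_one]
  ring

set_option maxHeartbeats 1000000 in
lemma T2_eq : T2f A v x = T1f A v x := by
  simp only [T1f, T2f, Fin.sum_univ_three, eps_000, eps_001, eps_002, eps_010, eps_011, eps_012,
    eps_020, eps_021, eps_022, eps_100, eps_101, eps_102, eps_110, eps_111, eps_112, eps_120,
    eps_121, eps_122, eps_200, eps_201, eps_202, eps_210, eps_211, eps_212, eps_220, eps_221,
    eps_222, zero_mul, one_mul, neg_mul, mul_zero, zero_add, add_zero, neg_neg, mul_neg, mul_one]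
  ring

set_option maxHeartbeats 1000000 in
lemma T3_eq : T3f A v x = T1f A v x := by
  simp only [T1f, T3f, Fin.sum_univ_three, eps_000, eps_001, eps_002, eps_010, eps_011, eps_012,
    eps_020, eps_021, eps_022, eps_100, eps_101, eps_102, eps_110, eps_111, eps_112, eps_120,
    eps_121, eps_122, eps_200, eps_201, eps_202, eps_210, eps_211, eps_212, eps_220, eps_221,
    eps_222, zero_mul, one_mul, neg_mul, mul_zero, zero_add, add_zero, neg_neg, mul_neg, mul_one]
  ring

set_option maxHeartbeats 1000000 in
lemma S1_eq : S1f A v x = Spf A v x := by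
  simp only [S1f, Spf, Fin.sum_univ_three, eps_000, eps_001, eps_002, eps_010, eps_011, eps_012,
    eps_020, eps_021, eps_022, eps_100, eps_101, eps_102, eps_110, eps_111, eps_112, eps_120,
    eps_121, eps_122, eps_200, eps_201, eps_202, eps_210, eps_211, eps_212, eps_220, eps_221,
    eps_222, zero_mul, one_mul, neg_mul, mul_zero, zero_add, add_zero, neg_neg, mul_neg, mul_one]
  ring

set_option maxHeartbeats 1000000 in
lemma Sq_eq : Sqf A v x = - Spf A v x := by
  simp only [Sqf, Spf, Fin.sum_univ_three, eps_000, eps_001, eps_002, eps_010, eps_011, eps_012,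
    eps_020, eps_021, eps_022, eps_100, eps_101, eps_102, eps_110, eps_111, eps_112, eps_120,
    eps_121, eps_122, eps_200, eps_201, eps_202, eps_210, eps_211, eps_212, eps_220, eps_221,
    eps_222, zero_mul, one_mul, neg_mul, mul_zero, zero_add, add_zero, neg_neg, mul_neg, mul_one]
  ring

set_option maxHeartbeats 1000000 in
lemma SSq_comb : S2f A v x + Sqf A v x
    = ∑ p, ∑ q, ∑ r, ∑ J, eps p q r * (A x J p * dd v q J r x + dd A q J p x * v x J r) := by
  simp only [S2f, Sqf, ← Finset.sum_add_distrib, ← mul_add]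

set_option maxHeartbeats 1000000 in
lemma G_eq : Gf A v x = Spf A v x + T1f A v x := by
  simp only [Gf, Spf, T1f, Fin.sum_univ_three, eps_000, eps_001, eps_002, eps_010, eps_011,
    eps_012, eps_020, eps_021, eps_022, eps_100, eps_101, eps_102, eps_110, eps_111, eps_112,
    eps_120, eps_121, eps_122, eps_200, eps_201, eps_202, eps_210, eps_211, eps_212, eps_220,
    eps_221, eps_222, zero_mul, one_mul, neg_mul, mul_zero, zero_add, add_zero, neg_neg,
    mul_neg, mul_one]
  ring

end algebra

set_option maxHeartbeats 2000000 in
theorem stmt1 (Ω : Set E3) (hΩ : IsOpen Ω) (hbdd : Bornology.IsBounded Ω)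
    (A v : E3 → Fin 3 → Fin 3 → ℝ)
    (U : Set E3) (hU : IsOpen U) (hclos : closure Ω ⊆ U) (hA : ContDiffOn ℝ 1 A U)
    (hv : ContDiff ℝ (⊤ : ℕ∞) v) (hvsupp : HasCompactSupport v) (hvsub : tsupport v ⊆ Ω) :
    HasDerivAt (fun t : ℝ => CS Ω (fun x J p => A x J p + t * v x J p))
      (4 * ∫ x in Ω, ∑ p, ∑ q, ∑ r, ∑ J, eps p q r *
        (pd q (fun y => A y J r) x + ∑ K, ∑ L, eps J K L * A x K q * A x L r) * v x J p)
      0 := by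
  classical
  -- components of A and v
  have hAc : ∀ J r, ContDiffOn ℝ 1 (fun y => A y J r) U := fun J r =>
    contDiffOn_pi.1 (contDiffOn_pi.1 hA J) r
  have hvc : ∀ J r, ContDiff ℝ 1 (fun y => v y J r) := fun J r =>
    (contDiff_pi.1 (contDiff_pi.1 hv J) r).of_le (by simp)
  have hvcs : ∀ J r, HasCompactSupport (fun y => v y J r) := fun J r =>
    hvsupp.comp_left (g := fun u : Fin 3 → Fin 3 → ℝ => u J r) rfl
  have hvts : ∀ J r, tsupport (fun y => v y J r) ⊆ Ω := by
    intro J r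
    refine subset_trans (closure_mono ?_) hvsub
    intro y hy
    simp only [Function.mem_support] at hy ⊢
    exact fun h => hy (by simp [h])
  -- differentiability & derivative of sum
  have hdA : ∀ J r x, x ∈ U → DifferentiableAt ℝ (fun y => A y J r) x := fun J r x hx =>
    ((hAc J r).differentiableOn one_ne_zero).differentiableAt (hU.mem_nhds hx)
  have hdv : ∀ J r x, DifferentiableAt ℝ (fun y => v y J r) x := fun J r x =>
    ((hvc J r).differentiable one_ne_zero).differentiableAt
  have hpd : ∀ (t : ℝ) (x : E3), x ∈ U → ∀ (q J r : Fin 3),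
      pd q (fun y => A y J r + t * v y J r) x = dd A q J r x + t * dd v q J r x := by
    intro t x hx q J r
    have h1 := (hdA J r x hx).hasFDerivAt
    have h2 := (hdv J r x).hasFDerivAt.const_mul t
    have h3 := (h1.fun_add h2).fderiv
    rw [pd, h3]
    simp only [ContinuousLinearMap.add_apply, ContinuousLinearMap.coe_smul',
      Pi.smul_apply, smul_eq_mul, dd, pd]
  -- continuity
  have cA : ∀ J r, ContinuousOn (fun x => A x J r) U := fun J r => (hAc J r).continuousOn
  have cdA : ∀ q J r, ContinuousOn (fun x => dd A q J r x) U := by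
    intro q J r
    have h := (hAc J r).continuousOn_fderiv_of_isOpen hU le_rfl
    exact (ContinuousLinearMap.apply ℝ ℝ (EuclideanSpace.single q 1)).continuous.comp_continuousOn h
  have cv : ∀ J r, ContinuousOn (fun x => v x J r) U := fun J r =>
    (hvc J r).continuous.continuousOn
  have cdv : ∀ q J r, ContinuousOn (fun x => dd v q J r x) U := by
    intro q J r
    have h := ((hvc J r).continuous_fderiv one_ne_zero).continuousOn (s := U)
    exact (ContinuousLinearMap.apply ℝ ℝ (EuclideanSpace.single q 1)).continuous.comp_continuousOn h
  have intCO : ∀ f : E3 → ℝ, ContinuousOn f U → IntegrableOn f Ω := fun f hf =>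
    my_integrableOn hbdd hclos hf
  -- integrability of all the pieces
  have iP0 : IntegrableOn (P0f A) Ω := by
    unfold P0f
    refine intOn_sum3' fun p => intOn_sum3' fun q => intOn_sum3' fun r => Integrable.const_mul ?_ _
    refine Integrable.add (intOn_sum3' fun J => intCO _ ((cA J p).mul (cdA q J r)))
      (Integrable.const_mul ?_ _)
    exact intOn_sum3' fun J => intOn_sum3' fun K => intOn_sum3' fun L =>
      intCO _ (((continuousOn_const.mul (cA J p)).mul (cA K q)).mul (cA L r))
  have iS1 : IntegrableOn (S1f A v) Ω := by
    unfold S1f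
    exact intOn_sum3' fun p => intOn_sum3' fun q => intOn_sum3' fun r => intOn_sum3' fun J =>
      intCO _ (continuousOn_const.mul ((cv J p).mul (cdA q J r)))
  have iS2 : IntegrableOn (S2f A v) Ω := by
    unfold S2f
    exact intOn_sum3' fun p => intOn_sum3' fun q => intOn_sum3' fun r => intOn_sum3' fun J =>
      intCO _ (continuousOn_const.mul ((cA J p).mul (cdv q J r)))
  have iSp : IntegrableOn (Spf A v) Ω := by
    unfold Spf
    exact intOn_sum3' fun p => intOn_sum3' fun q => intOn_sum3' fun r => intOn_sum3' fun J =>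
      intCO _ (continuousOn_const.mul ((cdA q J r).mul (cv J p)))
  have iSq : IntegrableOn (Sqf A v) Ω := by
    unfold Sqf
    exact intOn_sum3' fun p => intOn_sum3' fun q => intOn_sum3' fun r => intOn_sum3' fun J =>
      intCO _ (continuousOn_const.mul ((cdA q J p).mul (cv J r)))
  have iT1 : IntegrableOn (T1f A v) Ω := by
    unfold T1f
    exact intOn_sum3' fun p => intOn_sum3' fun q => intOn_sum3' fun r => intOn_sum3' fun J =>
      intOn_sum3' fun K => intOn_sum3' fun L =>
      intCO _ ((((continuousOn_const.mul continuousOn_const).mul (cv J p)).mul (cA K q)).mul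
        (cA L r))
  have iT2 : IntegrableOn (T2f A v) Ω := by
    unfold T2f
    exact intOn_sum3' fun p => intOn_sum3' fun q => intOn_sum3' fun r => intOn_sum3' fun J =>
      intOn_sum3' fun K => intOn_sum3' fun L =>
      intCO _ ((((continuousOn_const.mul continuousOn_const).mul (cA J p)).mul (cv K q)).mul
        (cA L r))
  have iT3 : IntegrableOn (T3f A v) Ω := by
    unfold T3f
    exact intOn_sum3' fun p => intOn_sum3' fun q => intOn_sum3' fun r => intOn_sum3' fun J =>
      intOn_sum3' fun K => intOn_sum3' fun L =>
      intCO _ ((((continuousOn_const.mul continuousOn_const).mul (cA J p)).mul (cA K q)).mul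
        (cv L r))
  have iQ1 : IntegrableOn (Q1f A v) Ω := by
    unfold Q1f
    exact intOn_sum3' fun p => intOn_sum3' fun q => intOn_sum3' fun r => intOn_sum3' fun J =>
      intCO _ (continuousOn_const.mul ((cv J p).mul (cdv q J r)))
  have iU1 : IntegrableOn (U1f A v) Ω := by
    unfold U1f
    exact intOn_sum3' fun p => intOn_sum3' fun q => intOn_sum3' fun r => intOn_sum3' fun J =>
      intOn_sum3' fun K => intOn_sum3' fun L =>
      intCO _ ((((continuousOn_const.mul continuousOn_const).mul (cA J p)).mul (cv K q)).mul
        (cv L r))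
  have iU2 : IntegrableOn (U2f A v) Ω := by
    unfold U2f
    exact intOn_sum3' fun p => intOn_sum3' fun q => intOn_sum3' fun r => intOn_sum3' fun J =>
      intOn_sum3' fun K => intOn_sum3' fun L =>
      intCO _ ((((continuousOn_const.mul continuousOn_const).mul (cv J p)).mul (cA K q)).mul
        (cv L r))
  have iU3 : IntegrableOn (U3f A v) Ω := by
    unfold U3f
    exact intOn_sum3' fun p => intOn_sum3' fun q => intOn_sum3' fun r => intOn_sum3' fun J =>
      intOn_sum3' fun K => intOn_sum3' fun L =>
      intCO _ ((((continuousOn_const.mul continuousOn_const).mul (cv J p)).mul (cv K q)).mul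
        (cA L r))
  have iV3 : IntegrableOn (V3f v) Ω := by
    unfold V3f
    exact intOn_sum3' fun p => intOn_sum3' fun q => intOn_sum3' fun r => intOn_sum3' fun J =>
      intOn_sum3' fun K => intOn_sum3' fun L =>
      intCO _ ((((continuousOn_const.mul continuousOn_const).mul (cv J p)).mul (cv K q)).mul
        (cv L r))
  have iP1 : IntegrableOn (P1f A v) Ω := by
    unfold P1f
    exact (iS1.add iS2).add (Integrable.const_mul (iT1.add (iT2.add iT3)) _)
  have iP2 : IntegrableOn (P2f A v) Ω := by
    unfold P2f
    exact iQ1.add (Integrable.const_mul (iU1.add (iU2.add iU3)) _)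
  have iP3 : IntegrableOn (P3f v) Ω := by
    unfold P3f
    exact Integrable.const_mul iV3 _
  -- pointwise expansion
  have hptw : ∀ (t : ℝ), ∀ x ∈ Ω,
      (∑ p, ∑ q, ∑ r, eps p q r *
        ((∑ J, (A x J p + t * v x J p) * pd q (fun y => A y J r + t * v y J r) x) +
          (2 / 3) * ∑ J, ∑ K, ∑ L, eps J K L * (A x J p + t * v x J p) *
            (A x K q + t * v x K q) * (A x L r + t * v x L r)))
      = P0f A x + t * P1f A v x + t^2 * P2f A v x + t^3 * P3f v x := by
    intro t x hx
    have hxU : x ∈ U := hclos (subset_closure hx)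
    have hr : ∀ (q J r : Fin 3),
        pd q (fun y => A y J r + t * v y J r) x = dd A q J r x + t * dd v q J r x :=
      hpd t x hxU
    simp only [hr]
    simpa only [P0f, P1f, P2f, P3f, S1f, S2f, T1f, T2f, T3f, Q1f, U1f, U2f, U3f, V3f] using
      expand_poly t (fun J p => A x J p) (fun J p => v x J p)
        (fun q J r => dd A q J r x) (fun q J r => dd v q J r x)
  -- CS as a cubic polynomial in t
  have hCS : ∀ t : ℝ, CS Ω (fun x J p => A x J p + t * v x J p)
      = 2 * (∫ x in Ω, P0f A x) + (2 * ∫ x in Ω, P1f A v x) * t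
        + (2 * ∫ x in Ω, P2f A v x) * t^2 + (2 * ∫ x in Ω, P3f v x) * t^3 := by
    intro t
    have j1 : Integrable (fun x => t * P1f A v x) (volume.restrict Ω) := iP1.const_mul t
    have j2 : Integrable (fun x => t^2 * P2f A v x) (volume.restrict Ω) := iP2.const_mul _
    have j3 : Integrable (fun x => t^3 * P3f v x) (volume.restrict Ω) := iP3.const_mul _
    have j0 : Integrable (fun x => P0f A x) (volume.restrict Ω) := iP0
    have j01 : Integrable (fun x => P0f A x + t * P1f A v x) (volume.restrict Ω) := j0.add j1
    have j012 : Integrable (fun x => P0f A x + t * P1f A v x + t^2 * P2f A v x)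
      (volume.restrict Ω) := j01.add j2
    have h1 : (∫ x in Ω, ∑ p, ∑ q, ∑ r, eps p q r *
        ((∑ J, (A x J p + t * v x J p) * pd q (fun y => A y J r + t * v y J r) x) +
          (2 / 3) * ∑ J, ∑ K, ∑ L, eps J K L * (A x J p + t * v x J p) *
            (A x K q + t * v x K q) * (A x L r + t * v x L r)))
        = (∫ x in Ω, P0f A x) + t * (∫ x in Ω, P1f A v x) + t^2 * (∫ x in Ω, P2f A v x)
          + t^3 * (∫ x in Ω, P3f v x) := by
      rw [setIntegral_congr_fun hΩ.measurableSet (fun x hx => hptw t x hx)]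
      rw [integral_add j012 j3, integral_add j01 j2, integral_add j0 j1,
        integral_const_mul, integral_const_mul, integral_const_mul]
    show 2 * (∫ x in Ω, ∑ p, ∑ q, ∑ r, eps p q r *
        ((∑ J, (A x J p + t * v x J p) * pd q (fun y => A y J r + t * v y J r) x) +
          (2 / 3) * ∑ J, ∑ K, ∑ L, eps J K L * (A x J p + t * v x J p) *
            (A x K q + t * v x K q) * (A x L r + t * v x L r))) = _
    rw [h1]; ring
  -- integration by parts
  have hterm : ∀ p q r J : Fin 3,
      ∫ x in Ω, (A x J p * dd v q J r x + dd A q J p x * v x J r) = 0 := by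
    intro p q r J
    simpa only [dd] using
      ibp_zero hΩ hbdd hU hclos (hAc J p) (hvc J r) (hvcs J r) (hvts J r) q
  have hsum0 : ∫ x in Ω, (S2f A v x + Sqf A v x) = 0 := by
    simp only [SSq_comb]
    rw [integral_finset_sum _ (fun p _ => intOn_sum3' fun q => intOn_sum3' fun r =>
      intOn_sum3' fun J => Integrable.const_mul
        (intCO _ (((cA J p).fun_mul (cdv q J r)).fun_add ((cdA q J p).fun_mul (cv J r)))) _)]
    refine Finset.sum_eq_zero fun p _ => ?_
    rw [integral_finset_sum _ (fun q _ => intOn_sum3' fun r =>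
      intOn_sum3' fun J => Integrable.const_mul
        (intCO _ (((cA J p).fun_mul (cdv q J r)).fun_add ((cdA q J p).fun_mul (cv J r)))) _)]
    refine Finset.sum_eq_zero fun q _ => ?_
    rw [integral_finset_sum _ (fun r _ =>
      intOn_sum3' fun J => Integrable.const_mul
        (intCO _ (((cA J p).fun_mul (cdv q J r)).fun_add ((cdA q J p).fun_mul (cv J r)))) _)]
    refine Finset.sum_eq_zero fun r _ => ?_
    rw [integral_finset_sum _ (fun J _ => Integrable.const_mul
        (intCO _ (((cA J p).fun_mul (cdv q J r)).fun_add ((cdA q J p).fun_mul (cv J r)))) _)]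
    refine Finset.sum_eq_zero fun J _ => ?_
    rw [integral_const_mul, hterm p q r J, mul_zero]
  have hS2 : ∫ x in Ω, S2f A v x = ∫ x in Ω, Spf A v x := by
    rw [integral_add iS2 iSq] at hsum0
    have hq : ∫ x in Ω, Sqf A v x = - ∫ x in Ω, Spf A v x := by
      simp only [Sq_eq]
      exact integral_neg _
    linarith
  -- identification of the linear coefficient
  have hG : ∫ x in Ω, Gf A v x = (∫ x in Ω, Spf A v x) + ∫ x in Ω, T1f A v x := by
    simp only [G_eq]
    exact integral_add iSp iT1
  have hc1 : ∫ x in Ω, P1f A v x = 2 * ∫ x in Ω, Gf A v x := by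
    have e1 : ∫ x in Ω, P1f A v x
        = ((∫ x in Ω, S1f A v x) + ∫ x in Ω, S2f A v x)
          + (2/3) * ((∫ x in Ω, T1f A v x) + ((∫ x in Ω, T2f A v x) + ∫ x in Ω, T3f A v x)) := by
      simp only [P1f]
      have k1 : Integrable (fun x => S1f A v x + S2f A v x) (volume.restrict Ω) := iS1.add iS2
      have k4 : Integrable (fun x => T2f A v x + T3f A v x) (volume.restrict Ω) := iT2.add iT3
      have k2 : Integrable (fun x => T1f A v x + (T2f A v x + T3f A v x))
        (volume.restrict Ω) := iT1.add k4
      have k3 : Integrable (fun x => (2/3) * (T1f A v x + (T2f A v x + T3f A v x)))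
        (volume.restrict Ω) := k2.const_mul _
      rw [integral_add k1 k3, integral_add iS1 iS2, integral_const_mul,
        integral_add iT1 k4, integral_add iT2 iT3]
    have e2 : ∫ x in Ω, T2f A v x = ∫ x in Ω, T1f A v x := by simp only [T2_eq]
    have e3 : ∫ x in Ω, T3f A v x = ∫ x in Ω, T1f A v x := by simp only [T3_eq]
    have e4 : ∫ x in Ω, S1f A v x = ∫ x in Ω, Spf A v x := by simp only [S1_eq]
    rw [e1, e2, e3, e4, hS2, hG]; ring
  -- conclusion
  suffices h : HasDerivAt (fun t : ℝ => CS Ω fun x J p => A x J p + t * v x J p)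
      (4 * ∫ x in Ω, Gf A v x) 0 by
    have hGf : (fun x : E3 => Gf A v x) = fun x => ∑ p, ∑ q, ∑ r, ∑ J, eps p q r *
        (pd q (fun y => A y J r) x + ∑ K, ∑ L, eps J K L * A x K q * A x L r) * v x J p := by
      funext x; simp only [Gf, dd]
    rw [show (∫ x in Ω, ∑ p, ∑ q, ∑ r, ∑ J, eps p q r *
        (pd q (fun y => A y J r) x + ∑ K, ∑ L, eps J K L * A x K q * A x L r) * v x J p)
      = ∫ x in Ω, Gf A v x from by rw [hGf]]
    exact h
  have hfun : (fun t : ℝ => CS Ω fun x J p => A x J p + t * v x J p)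
      = fun t : ℝ => 2 * (∫ x in Ω, P0f A x) + (2 * ∫ x in Ω, P1f A v x) * t
        + (2 * ∫ x in Ω, P2f A v x) * t^2 + (2 * ∫ x in Ω, P3f v x) * t^3 := funext hCS
  rw [hfun]
  have H : HasDerivAt (fun t : ℝ => 2 * (∫ x in Ω, P0f A x) + (2 * ∫ x in Ω, P1f A v x) * t
      + (2 * ∫ x in Ω, P2f A v x) * t^2 + (2 * ∫ x in Ω, P3f v x) * t^3)
      (0 + (2 * ∫ x in Ω, P1f A v x) * 1 + (2 * ∫ x in Ω, P2f A v x) * ((2:ℕ) * 0^(2-1))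
        + (2 * ∫ x in Ω, P3f v x) * ((3:ℕ) * 0^(3-1))) 0 := by
    exact (((hasDerivAt_const 0 _).add ((hasDerivAt_id (0:ℝ)).const_mul _)).add
      ((hasDerivAt_pow 2 (0:ℝ)).const_mul _)).add ((hasDerivAt_pow 3 (0:ℝ)).const_mul _)
  convert H using 1
  rw [hc1]
  push_cast
  ring
end
end

section
/- For every unit vector e ∈ ℝ³, every index V ∈ {1,2,3}, and every t ≥ 0, there exists A ∈ ℝ^{3×3} whose V-th row is zero, with Frobenius norm satisfying |A|² = 2t, and such that T(A)_{Zp} = 2 t e_p if Z = V and T(A)_{Zp} = 0 if Z ≠ V. -/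
open scoped BigOperators

noncomputable section

/-- `3 × 3` real matrices, as functions of (row, column). -/
abbrev M33 := Fin 3 → Fin 3 → ℝ

/-- `T(A)_{Zp} = ε_{pqr} ε_{ZBC} A_{Bq} A_{Cr}`. -/
def Tmap (A : M33) : M33 :=
  fun Z p => ∑ q, ∑ r, ∑ B, ∑ C, eps p q r * eps Z B C * A B q * A C r

/-- The Frobenius norm on `M33`. -/
def fnorm (A : M33) : ℝ := Real.sqrt (∑ i, ∑ j, (A i j) ^ 2)

set_option maxHeartbeats 1000000

def cross (a b : Fin 3 → ℝ) : Fin 3 → ℝ :=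
  ![a 1 * b 2 - a 2 * b 1, a 2 * b 0 - a 0 * b 2, a 0 * b 1 - a 1 * b 0]

def nx : Fin 3 → Fin 3 := ![1, 2, 0]
def nx2 : Fin 3 → Fin 3 := ![2, 0, 1]

lemma Tmap_eq (A : M33) (Z p : Fin 3) :
    Tmap A Z p = 2 * cross (A (nx Z)) (A (nx2 Z)) p := by
  fin_cases Z <;> fin_cases p <;>
    (simp only [Tmap, Fin.sum_univ_three, nx, nx2];
     norm_num [eps, cross]; try ring)

lemma cross_zero_left (b : Fin 3 → ℝ) (p : Fin 3) : cross (fun _ => (0:ℝ)) b p = 0 := by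
  fin_cases p <;> simp [cross]

lemma cross_zero_right (a : Fin 3 → ℝ) (p : Fin 3) : cross a (fun _ => (0:ℝ)) p = 0 := by
  fin_cases p <;> simp [cross]

lemma exists_uv (e : Fin 3 → ℝ) (h : e 0 ^ 2 + e 1 ^ 2 + e 2 ^ 2 = 1) :
    ∃ u v : Fin 3 → ℝ, (u 0 ^ 2 + u 1 ^ 2 + u 2 ^ 2 = 1) ∧
      (v 0 ^ 2 + v 1 ^ 2 + v 2 ^ 2 = 1) ∧ ∀ p, cross u v p = e p := by
  by_cases hc : e 0 ^ 2 + e 1 ^ 2 = 0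
  · have h0 : e 0 = 0 := by nlinarith [sq_nonneg (e 0), sq_nonneg (e 1)]
    have h1 : e 1 = 0 := by nlinarith [sq_nonneg (e 0), sq_nonneg (e 1)]
    have h2 : e 2 ^ 2 = 1 := by rw [h0, h1] at h; linarith [h]
    refine ⟨![1,0,0], ![0, e 2, 0], by simp, by simp [h2], ?_⟩
    intro p; fin_cases p <;> simp [cross, h0, h1]
  · have hcpos : 0 < e 0 ^ 2 + e 1 ^ 2 :=
      lt_of_le_of_ne (by positivity) (Ne.symm hc)
    set s := Real.sqrt (e 0 ^ 2 + e 1 ^ 2) with hs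
    have hs2 : s ^ 2 = e 0 ^ 2 + e 1 ^ 2 := Real.sq_sqrt (by positivity)
    have hsne : s ≠ 0 := by positivity
    refine ⟨![e 1 / s, -(e 0) / s, 0], ![e 0 * e 2 / s, e 1 * e 2 / s, -s], ?_, ?_, ?_⟩
    · simp; field_simp; linarith [hs2]
    · simp; field_simp; nlinarith [hs2]
    · have hss : s * s = e 0 ^ 2 + e 1 ^ 2 := by rw [← hs2]; ring
      intro p
      fin_cases p
      · simp only [cross, Matrix.cons_val_zero, Matrix.cons_val_one, Matrix.head_cons,
           Matrix.cons_val_two, Matrix.tail_cons, Fin.isValue,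
           show (⟨0, by omega⟩ : Fin 3) = 0 from rfl]
        field_simp
        ring
      · simp only [cross, Matrix.cons_val_zero, Matrix.cons_val_one, Matrix.head_cons,
           Matrix.cons_val_two, Matrix.tail_cons, Fin.isValue,
           show (⟨1, by omega⟩ : Fin 3) = 1 from rfl]
        field_simp
        ring
      · simp only [cross, Matrix.cons_val_zero, Matrix.cons_val_one, Matrix.head_cons,
           Matrix.cons_val_two, Matrix.tail_cons, Fin.isValue,
           show (⟨2, by omega⟩ : Fin 3) = 2 from rfl]
        field_simp
        linear_combination (-(e 2)) * hss

theorem stmt3 (e : Fin 3 → ℝ) (he : Real.sqrt (∑ i, (e i) ^ 2) = 1)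
    (V : Fin 3) (t : ℝ) (ht : 0 ≤ t) :
    ∃ A : M33,
      (∀ p, A V p = 0) ∧
      fnorm A ^ 2 = 2 * t ∧
      (∀ p, Tmap A V p = 2 * t * e p) ∧
      (∀ Z, Z ≠ V → ∀ p, Tmap A Z p = 0) := by
  have hsum : e 0 ^ 2 + e 1 ^ 2 + e 2 ^ 2 = 1 := by
    have h1 : (∑ i, (e i) ^ 2) = 1 := by
      have := congrArg (· ^ 2) he
      simpa [Real.sq_sqrt (Finset.sum_nonneg fun i _ => sq_nonneg (e i))] using this
    simpa [Fin.sum_univ_three] using h1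
  obtain ⟨u, v, hu, hv, huv⟩ := exists_uv e hsum
  set st := Real.sqrt t with hst
  have hst2 : st ^ 2 = t := Real.sq_sqrt ht
  set a : Fin 3 → ℝ := fun j => st * u j with ha
  set b : Fin 3 → ℝ := fun j => st * v j with hb
  set A : M33 := fun i => if i = nx V then a else if i = nx2 V then b else (fun _ => 0) with hA
  have hAV : ∀ p, A V p = 0 := by
    intro p
    have h1 : V ≠ nx V := by fin_cases V <;> simp [nx]
    have h2 : V ≠ nx2 V := by fin_cases V <;> simp [nx2]
    simp [hA, h1, h2]
  have hAnx : A (nx V) = a := by simp [hA]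
  have hAnx2 : A (nx2 V) = b := by
    have h1 : nx2 V ≠ nx V := by fin_cases V <;> simp [nx, nx2]
    simp [hA, h1]
  have hcab : ∀ p, cross a b p = t * e p := by
    intro p
    have : cross a b p = st ^ 2 * cross u v p := by
      fin_cases p <;> (simp [cross, ha, hb]; ring)
    rw [this, hst2, huv]
  refine ⟨A, hAV, ?_, ?_, ?_⟩
  · -- fnorm
    have hsum2 : (∑ i, ∑ j, (A i j) ^ 2) = 2 * t := by
      fin_cases V <;>
        (simp only [hA, Fin.sum_univ_three, nx, nx2] ;
         simp [ha, hb, Fin.ext_iff] ;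
         nlinarith [hu, hv, hst2])
    rw [fnorm, Real.sq_sqrt (by rw [hsum2]; linarith), hsum2]
  · intro p
    rw [Tmap_eq, hAnx, hAnx2, hcab]; ring
  · intro Z hZ p
    rw [Tmap_eq]
    have : V = nx Z ∨ V = nx2 Z := by
      fin_cases Z <;> fin_cases V <;> simp_all [nx, nx2]
    rcases this with h | h
    · rw [← h]
      have : A V = fun _ => (0:ℝ) := funext hAV
      rw [this, cross_zero_left]; ring
    · rw [← h]
      have : A V = fun _ => (0:ℝ) := funext hAV
      rw [this, cross_zero_right]; ring
end
end

section
/- Let α > 2, α' = α/(α−1), β = α/(α−2), and let H(A) = ℓ_α |A|^α with ℓ_α = (α · 2^{α/2} · 16 · 3^β)^{−1} (4α')^{−α/(2−α')}. Then there exists a constant c > 0 such that for all λ, μ ∈ ℝ^{3×3}, g_H(λ, μ) ≥ c ( |μ|^{α'} + |λ|^β ). -/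
open scoped BigOperators

noncomputable section

/-- The contraction `X : Y = Σ_{i,j} X_{ij} Y_{ij}`. -/
def dotM (X Y : M33) : ℝ := ∑ i, ∑ j, X i j * Y i j

/-- `g_H(λ, μ) = sup_{A} ( A:μ + λ:T(A) − H(A) )`, valued in `ℝ ∪ {±∞}` (the
supremum is never `-∞` since `H` is real-valued). -/
def gH (H : M33 → ℝ) (lam mu : M33) : EReal :=
  ⨆ A : M33, ((dotM A mu + dotM lam (Tmap A) - H A : ℝ) : EReal)

set_option maxHeartbeats 1000000

lemma fmk2 : (⟨2, by norm_num⟩ : Fin 3) = 2 := rfl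
lemma f30 : (3 : Fin 3) = 0 := rfl
lemma fa11 : (1 : Fin 3) + 1 = 2 := rfl
lemma fa12 : (1 : Fin 3) + 2 = 0 := rfl
lemma fa21 : (2 : Fin 3) + 1 = 0 := rfl
lemma fa22 : (2 : Fin 3) + 2 = 1 := rfl
lemma fa01 : (0 : Fin 3) + 1 = 1 := rfl
lemma fa02 : (0 : Fin 3) + 2 = 2 := rfl

lemma Tmap_eq_s4 (A : M33) : Tmap A = fun Z p =>
    2*(A (Z+1) (p+1) * A (Z+2) (p+2) - A (Z+1) (p+2) * A (Z+2) (p+1)) := by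
  funext Z p
  fin_cases Z <;> fin_cases p <;>
    · show (∑ q, ∑ r, ∑ B, ∑ C, eps _ q r * eps _ B C * A B q * A C r) = _
      norm_num [eps, Fin.sum_univ_three, fmk2, f30, fa11, fa12, fa21, fa22,
        fa01, fa02]
      ring

def Amat (B C q r : Fin 3) (u v : ℝ) : M33 :=
  fun i j => if i = B ∧ j = q then u else if i = C ∧ j = r then v else 0

lemma T1 (Z p : Fin 3) (lam : M33) (u v : ℝ) :
    dotM lam (Tmap (Amat (Z+1) (Z+2) (p+1) (p+2) u v)) = 2*(u*v)*lam Z p := by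
  rw [Tmap_eq_s4]
  fin_cases Z <;> fin_cases p <;>
      simp (config := { decide := true }) [dotM, Amat, Fin.sum_univ_three, fmk2, f30, fa11, fa12, fa21,
        fa22, fa01, fa02] <;> ring_nf

lemma T0 (Z p : Fin 3) (lam : M33) (u : ℝ) :
    dotM lam (Tmap (Amat Z Z p p u 0)) = 0 := by
  rw [Tmap_eq_s4]
  fin_cases Z <;> fin_cases p <;>
    simp (config := { decide := true }) [dotM, Amat, Fin.sum_univ_three, fmk2, f30, fa11, fa12, fa21,
      fa22, fa01, fa02]

lemma D1 (Z p : Fin 3) (mu : M33) (u v : ℝ) :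
    dotM (Amat (Z+1) (Z+2) (p+1) (p+2) u v) mu = u * mu (Z+1) (p+1) + v * mu (Z+2) (p+2) := by
  fin_cases Z <;> fin_cases p <;>
      simp (config := { decide := true }) [dotM, Amat, Fin.sum_univ_three, fmk2, f30, fa11, fa12, fa21,
        fa22, fa01, fa02] <;> ring_nf

lemma D0 (Z p : Fin 3) (mu : M33) (u : ℝ) :
    dotM (Amat Z Z p p u 0) mu = u * mu Z p := by
  fin_cases Z <;> fin_cases p <;>
    simp (config := { decide := true }) [dotM, Amat, Fin.sum_univ_three, fmk2, f30, fa11, fa12, fa21,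
      fa22, fa01, fa02]

lemma F1 (Z p : Fin 3) (u v : ℝ) :
    fnorm (Amat (Z+1) (Z+2) (p+1) (p+2) u v) = Real.sqrt (u^2 + v^2) := by
  unfold fnorm
  congr 1
  fin_cases Z <;> fin_cases p <;>
      simp (config := { decide := true }) [Amat, Fin.sum_univ_three, fmk2, f30, fa11, fa12, fa21,
        fa22, fa01, fa02] <;> ring_nf

lemma F0 (Z p : Fin 3) (u : ℝ) :
    fnorm (Amat Z Z p p u 0) = |u| := by
  rw [show |u| = Real.sqrt (u^2) from (Real.sqrt_sq_eq_abs u).symm]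
  unfold fnorm
  congr 1
  fin_cases Z <;> fin_cases p <;>
    simp (config := { decide := true }) [Amat, Fin.sum_univ_three, fmk2, f30, fa11, fa12, fa21,
      fa22, fa01, fa02]

lemma fnorm_nonneg (A : M33) : 0 ≤ fnorm A := Real.sqrt_nonneg _

/-- maximizing entry bounds the Frobenius norm -/
lemma fnorm_le_max (X : M33) (Z p : Fin 3) (h : ∀ i j, |X i j| ≤ |X Z p|) :
    fnorm X ≤ 3 * |X Z p| := by
  set m := |X Z p| with hm
  have hm0 : 0 ≤ m := abs_nonneg _
  have hsum : (∑ i, ∑ j, (X i j)^2) ≤ (3*m)^2 := by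
    have hb : ∀ i j : Fin 3, (X i j)^2 ≤ m^2 := by
      intro i j
      calc (X i j)^2 = |X i j|^2 := (sq_abs _).symm
        _ ≤ m^2 := pow_le_pow_left₀ (abs_nonneg _) (h i j) 2
    calc (∑ i, ∑ j, (X i j)^2) ≤ ∑ _i : Fin 3, ∑ _j : Fin 3, m^2 :=
          Finset.sum_le_sum (fun i _ => Finset.sum_le_sum (fun j _ => hb i j))
      _ = 9 * m^2 := by simp [Fin.sum_univ_three]; ring
      _ ≤ (3*m)^2 := by nlinarith
  calc fnorm X = Real.sqrt (∑ i, ∑ j, (X i j)^2) := rfl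
    _ ≤ Real.sqrt ((3*m)^2) := Real.sqrt_le_sqrt hsum
    _ = 3*m := Real.sqrt_sq (by positivity)

lemma opt (α d ℓ' : ℝ) (hd : 0 < d) (hdα : d < α) (hl : 0 < ℓ') :
    ∃ c > 0, ∀ m : ℝ, 0 ≤ m → ∃ t, 0 ≤ t ∧
      c * m ^ (α/(α-d)) ≤ m * t ^ d - ℓ' * t ^ α := by
  have had : 0 < α - d := by linarith
  have hα0 : 0 < α := by linarith
  set K : ℝ := (2*ℓ')⁻¹ ^ (1/(α-d)) with hK
  have hK0 : 0 < K := Real.rpow_pos_of_pos (by positivity) _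
  refine ⟨K ^ d / 2, by positivity, ?_⟩
  intro m hm
  refine ⟨K * m ^ (1/(α-d)), by positivity, ?_⟩
  rcases eq_or_lt_of_le hm with h0 | hm0
  · have hne1 : (1:ℝ)/(α-d) ≠ 0 := by positivity
    have hne2 : α/(α-d) ≠ 0 := by positivity
    simp [← h0, Real.zero_rpow hne1, Real.zero_rpow hne2, Real.zero_rpow hd.ne',
      Real.zero_rpow hα0.ne', Real.zero_rpow (inv_ne_zero had.ne')]
  · have e1 : (K * m ^ (1/(α-d))) ^ d = K^d * m ^ (d/(α-d)) := by
      rw [Real.mul_rpow hK0.le (by positivity), ← Real.rpow_mul hm]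
      ring_nf
    have e2 : (K * m ^ (1/(α-d))) ^ α = K^α * m ^ (α/(α-d)) := by
      rw [Real.mul_rpow hK0.le (by positivity), ← Real.rpow_mul hm]
      ring_nf
    have e3 : m * m ^ (d/(α-d)) = m ^ (α/(α-d)) := by
      nth_rewrite 1 [← Real.rpow_one m]
      rw [← Real.rpow_add hm0]
      congr 1
      field_simp
      ring
    have e4 : K ^ α = (2*ℓ')⁻¹ * K ^ d := by
      have h5 : K ^ (α - d) = (2*ℓ')⁻¹ := by
        rw [hK, ← Real.rpow_mul (by positivity)]
        rw [one_div, inv_mul_cancel₀ had.ne', Real.rpow_one]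
      calc K ^ α = K ^ (α - d + d) := by ring_nf
        _ = K ^ (α-d) * K ^ d := Real.rpow_add hK0 _ _
        _ = _ := by rw [h5]
    rw [e1, e2, e4]
    have hl2 : ℓ' * (2*ℓ')⁻¹ = 1/2 := by field_simp
    have e5 : m * (K ^ d * m ^ (d / (α - d))) = K ^ d * m ^ (α/(α-d)) := by
      rw [show m * (K ^ d * m ^ (d / (α - d))) = K^d * (m * m ^ (d/(α-d))) by ring, e3]
    rw [e5]
    apply le_of_eq
    linear_combination (K ^ d * m ^ (α/(α-d))) * hl2

theorem stmt4 (α : ℝ) (hα : 2 < α) :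
    ∃ c > 0, ∀ lam mu : M33,
      ((c * (fnorm mu ^ (α / (α - 1)) + fnorm lam ^ (α / (α - 2))) : ℝ) : EReal) ≤
        gH (fun A =>
            (α * (2 : ℝ) ^ (α / 2) * 16 * (3 : ℝ) ^ (α / (α - 2)))⁻¹ *
              (4 * (α / (α - 1))) ^ (-(α / (2 - α / (α - 1)))) * fnorm A ^ α)
          lam mu := by
  have h1 : (0:ℝ) < α - 1 := by linarith
  have h2 : (0:ℝ) < α - 2 := by linarith
  have hα0 : (0:ℝ) < α := by linarith
  set ℓ : ℝ := (α * (2 : ℝ) ^ (α / 2) * 16 * (3 : ℝ) ^ (α / (α - 2)))⁻¹ *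
      (4 * (α / (α - 1))) ^ (-(α / (2 - α / (α - 1)))) with hℓdef
  have hℓ : 0 < ℓ := by
    apply mul_pos
    · rw [inv_pos]
      have e1 := Real.rpow_pos_of_pos (by norm_num : (0:ℝ) < 2) (α/2)
      have e2 := Real.rpow_pos_of_pos (by norm_num : (0:ℝ) < 3) (α/(α-2))
      have : (0:ℝ) < 16 := by norm_num
      exact mul_pos (mul_pos (mul_pos hα0 e1) this) e2
    · exact Real.rpow_pos_of_pos (mul_pos (by norm_num) (div_pos hα0 h1)) _
  obtain ⟨c₁, hc₁, hopt1⟩ := opt α 1 ℓ one_pos (by linarith) hℓ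
  obtain ⟨c₂, hc₂, hopt2⟩ := opt α 2 (ℓ * (2:ℝ) ^ (α/2)) two_pos hα
    (mul_pos hℓ (Real.rpow_pos_of_pos (by norm_num) _))
  set p1 : ℝ := c₁ * ((1:ℝ)/3) ^ (α/(α-1)) with hp1
  set p2 : ℝ := c₂ * ((2:ℝ)/3) ^ (α/(α-2)) with hp2
  have hp1pos : 0 < p1 := mul_pos hc₁ (Real.rpow_pos_of_pos (by norm_num) _)
  have hp2pos : 0 < p2 := mul_pos hc₂ (Real.rpow_pos_of_pos (by norm_num) _)
  refine ⟨min p1 p2 / 2, by positivity, ?_⟩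
  intro lam mu
  -- Claim A : lower bound from mu
  have claimA : ((p1 * fnorm mu ^ (α/(α-1)) : ℝ) : EReal) ≤
      gH (fun A => ℓ * fnorm A ^ α) lam mu := by
    obtain ⟨w, -, hw⟩ := Finset.exists_max_image (Finset.univ : Finset (Fin 3 × Fin 3))
      (fun w => |mu w.1 w.2|) ⟨(0,0), Finset.mem_univ _⟩
    obtain ⟨Z, p⟩ := w
    set m := |mu Z p| with hm
    have hm0 : 0 ≤ m := abs_nonneg _
    have hfm : fnorm mu ≤ 3 * m := fnorm_le_max mu Z p (fun i j => hw (i, j) (Finset.mem_univ _))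
    obtain ⟨t, ht0, hval⟩ := hopt1 m hm0
    set s : ℝ := if 0 ≤ mu Z p then 1 else -1 with hs
    have hs1 : s = 1 ∨ s = -1 := by
      rw [hs]; split_ifs <;> simp
    have hsmu : s * mu Z p = m := by
      rw [hs, hm]; split_ifs with h
      · simp [abs_of_nonneg h]
      · rw [abs_of_neg (lt_of_not_ge h)]; ring
    set A : M33 := Amat Z Z p p (s*t) 0 with hA
    have hdot : dotM A mu = t * m := by
      rw [hA, D0, ← hsmu]; ring
    have hT : dotM lam (Tmap A) = 0 := by rw [hA]; exact T0 Z p lam (s*t)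
    have hfn : fnorm A = t := by
      rw [hA, F0, abs_mul, abs_of_nonneg ht0]
      rcases hs1 with h|h <;> simp [h]
    have hreal : p1 * fnorm mu ^ (α/(α-1)) ≤ dotM A mu + dotM lam (Tmap A) - ℓ * fnorm A ^ α := by
      rw [hdot, hT, hfn]
      have hA1 : fnorm mu ^ (α/(α-1)) ≤ (3*m) ^ (α/(α-1)) :=
        Real.rpow_le_rpow (fnorm_nonneg mu) hfm (by positivity)
      have e0 : ((1:ℝ)/3) ^ (α/(α-1)) * (3:ℝ) ^ (α/(α-1)) = 1 := by
        rw [← Real.mul_rpow (by norm_num) (by norm_num)]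
        norm_num
      have ht1 : t ^ (1:ℝ) = t := Real.rpow_one t
      calc p1 * fnorm mu ^ (α/(α-1)) ≤ p1 * (3*m) ^ (α/(α-1)) :=
            mul_le_mul_of_nonneg_left hA1 hp1pos.le
        _ = c₁ * m ^ (α/(α-1)) := by
            rw [hp1, Real.mul_rpow (by norm_num) hm0]
            linear_combination (c₁ * m ^ (α/(α-1))) * e0
        _ ≤ m * t ^ (1:ℝ) - ℓ * t ^ α := hval
        _ = t * m + 0 - ℓ * t ^ α := by rw [ht1]; ring
    refine le_trans (EReal.coe_le_coe_iff.2 hreal) ?_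
    exact le_iSup (fun A : M33 => ((dotM A mu + dotM lam (Tmap A) - ℓ * fnorm A ^ α : ℝ) : EReal)) A
  -- Claim B : lower bound from lam
  have claimB : ((p2 * fnorm lam ^ (α/(α-2)) : ℝ) : EReal) ≤
      gH (fun A => ℓ * fnorm A ^ α) lam mu := by
    obtain ⟨w, -, hw⟩ := Finset.exists_max_image (Finset.univ : Finset (Fin 3 × Fin 3))
      (fun w => |lam w.1 w.2|) ⟨(0,0), Finset.mem_univ _⟩
    obtain ⟨Z, p⟩ := w
    set m := |lam Z p| with hm
    have hm0 : 0 ≤ m := abs_nonneg _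
    have hfm : fnorm lam ≤ 3 * m := fnorm_le_max lam Z p (fun i j => hw (i, j) (Finset.mem_univ _))
    obtain ⟨t, ht0, hval⟩ := hopt2 (2*m) (by positivity)
    set s : ℝ := if 0 ≤ lam Z p then 1 else -1 with hs
    have hs1 : s = 1 ∨ s = -1 := by
      rw [hs]; split_ifs <;> simp
    have hslam : s * lam Z p = m := by
      rw [hs, hm]; split_ifs with h
      · simp [abs_of_nonneg h]
      · rw [abs_of_neg (lt_of_not_ge h)]; ring
    have hst2 : (s*t)^2 = t^2 := by rcases hs1 with h|h <;> rw [h] <;> ring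
    -- common facts for A and A'
    have hfn2 : Real.sqrt (t^2 + (s*t)^2) = Real.sqrt 2 * t := by
      rw [hst2, show t^2 + t^2 = 2 * t^2 by ring, Real.sqrt_mul (by norm_num), Real.sqrt_sq ht0]
    have hpow : (Real.sqrt 2 * t) ^ α = (2:ℝ) ^ (α/2) * t ^ α := by
      rw [Real.mul_rpow (Real.sqrt_nonneg 2) ht0]
      congr 1
      rw [show Real.sqrt 2 = (2:ℝ) ^ ((1:ℝ)/2) from Real.sqrt_eq_rpow 2,
        ← Real.rpow_mul (by norm_num)]
      congr 1
      ring
    have ht2 : t ^ ((2:ℕ):ℝ) = t^(2:ℕ) := Real.rpow_natCast t 2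
    -- the value of the quadratic part
    have hmain : c₂ * (2*m) ^ (α/(α-2)) ≤ 2*(t*(s*t))*lam Z p - ℓ * (Real.sqrt 2 * t) ^ α := by
      have e6 : 2*(t*(s*t))*lam Z p = 2*m*t^(2:ℕ) := by
        rw [show 2*(t*(s*t))*lam Z p = 2*(s*lam Z p)*t^(2:ℕ) by ring, hslam]
      rw [e6, hpow]
      calc c₂ * (2*m) ^ (α/(α-2)) ≤ (2*m) * t ^ (2:ℝ) - (ℓ * (2:ℝ)^(α/2)) * t ^ α := hval
        _ = 2*m*t^(2:ℕ) - ℓ * ((2:ℝ)^(α/2) * t ^ α) := by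
            rw [show t ^ (2:ℝ) = t^(2:ℕ) by rw [← Real.rpow_natCast t 2]; norm_num]
            ring
    have hchain : p2 * fnorm lam ^ (α/(α-2)) ≤ c₂ * (2*m) ^ (α/(α-2)) := by
      have hA1 : fnorm lam ^ (α/(α-2)) ≤ (3*m) ^ (α/(α-2)) :=
        Real.rpow_le_rpow (fnorm_nonneg lam) hfm (by positivity)
      have e0 : ((2:ℝ)/3) ^ (α/(α-2)) * (3*m) ^ (α/(α-2)) = (2*m) ^ (α/(α-2)) := by
        rw [← Real.mul_rpow (by norm_num) (by positivity)]
        congr 1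
        ring
      calc p2 * fnorm lam ^ (α/(α-2)) ≤ p2 * (3*m) ^ (α/(α-2)) :=
            mul_le_mul_of_nonneg_left hA1 hp2pos.le
        _ = c₂ * (2*m) ^ (α/(α-2)) := by
            rw [hp2]
            linear_combination c₂ * e0
    -- choose the sign of the test matrix according to the sign of its pairing with mu
    set D : ℝ := t * mu (Z+1) (p+1) + (s*t) * mu (Z+2) (p+2) with hD
    rcases le_total 0 D with hDpos | hDneg
    · set A : M33 := Amat (Z+1) (Z+2) (p+1) (p+2) t (s*t) with hA
      have hdot : dotM A mu = D := by rw [hA, D1, hD]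
      have hT : dotM lam (Tmap A) = 2*(t*(s*t))*lam Z p := by rw [hA, T1]
      have hfn : fnorm A = Real.sqrt 2 * t := by rw [hA, F1, hfn2]
      have hreal : p2 * fnorm lam ^ (α/(α-2)) ≤
          dotM A mu + dotM lam (Tmap A) - ℓ * fnorm A ^ α := by
        rw [hdot, hT, hfn]
        have := le_trans hchain hmain
        linarith
      refine le_trans (EReal.coe_le_coe_iff.2 hreal) ?_
      exact le_iSup (fun A : M33 => ((dotM A mu + dotM lam (Tmap A) - ℓ * fnorm A ^ α : ℝ) : EReal)) A
    · set A : M33 := Amat (Z+1) (Z+2) (p+1) (p+2) (-t) (-(s*t)) with hA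
      have hdot : dotM A mu = -D := by rw [hA, D1, hD]; ring
      have hT : dotM lam (Tmap A) = 2*(t*(s*t))*lam Z p := by
        rw [hA, T1]; ring
      have hfn : fnorm A = Real.sqrt 2 * t := by
        rw [hA, F1, show (-t)^2 + (-(s*t))^2 = t^2 + (s*t)^2 by ring, hfn2]
      have hreal : p2 * fnorm lam ^ (α/(α-2)) ≤
          dotM A mu + dotM lam (Tmap A) - ℓ * fnorm A ^ α := by
        rw [hdot, hT, hfn]
        have := le_trans hchain hmain
        linarith
      refine le_trans (EReal.coe_le_coe_iff.2 hreal) ?_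
      exact le_iSup (fun A : M33 => ((dotM A mu + dotM lam (Tmap A) - ℓ * fnorm A ^ α : ℝ) : EReal)) A
  -- combine the two claims
  set x : ℝ := fnorm mu ^ (α/(α-1)) with hx
  set y : ℝ := fnorm lam ^ (α/(α-2)) with hy
  have hx0 : 0 ≤ x := Real.rpow_nonneg (fnorm_nonneg mu) _
  have hy0 : 0 ≤ y := Real.rpow_nonneg (fnorm_nonneg lam) _
  rcases le_total (p1 * x) (p2 * y) with h | h
  · have hfin : min p1 p2 / 2 * (x + y) ≤ p2 * y := by
      have l1 : min p1 p2 ≤ p1 := min_le_left _ _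
      have l2 : min p1 p2 ≤ p2 := min_le_right _ _
      nlinarith [min_le_left p1 p2, min_le_right p1 p2]
    exact le_trans (EReal.coe_le_coe_iff.2 hfin) claimB
  · have hfin : min p1 p2 / 2 * (x + y) ≤ p1 * x := by
      nlinarith [min_le_left p1 p2, min_le_right p1 p2]
    exact le_trans (EReal.coe_le_coe_iff.2 hfin) claimA
end
end

section
/- Let α > 2, α' = α/(α−1), β = α/(α−2), and let H(A) = ℓ_α |A|^α with ℓ_α = (α · 2^{α/2} · 16 · 3^β)^{−1} (4α')^{−α/(2−α')}. If λ, μ ∈ ℝ^{3×3} satisfy (1/(4 · 3^{β/2})) |λ|^{1/(2−α')} ≤ |μ| ≤ (4α')^{1/(2−α')} |λ|^{1/(2−α')}, then g_H(λ, μ) ≥ (1/(32 · 16 · 3^β)) (4α')^{−α'/(2−α')} ( |λ|^β + |μ|^{α'} ). -/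
open scoped BigOperators

noncomputable section

set_option maxHeartbeats 1000000 in
theorem stmt6 (α : ℝ) (hα : 2 < α) (lam mu : M33)
    (hlow : (1 / (4 * (3 : ℝ) ^ ((α / (α - 2)) / 2))) *
        fnorm lam ^ (1 / (2 - α / (α - 1))) ≤ fnorm mu)
    (hhigh : fnorm mu ≤
        (4 * (α / (α - 1))) ^ (1 / (2 - α / (α - 1))) *
          fnorm lam ^ (1 / (2 - α / (α - 1)))) :
    (((1 / (32 * 16 * (3 : ℝ) ^ (α / (α - 2)))) *
        (4 * (α / (α - 1))) ^ (-((α / (α - 1)) / (2 - α / (α - 1)))) *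
        (fnorm lam ^ (α / (α - 2)) + fnorm mu ^ (α / (α - 1))) : ℝ) : EReal) ≤
      gH (fun A =>
          (α * (2 : ℝ) ^ (α / 2) * 16 * (3 : ℝ) ^ (α / (α - 2)))⁻¹ *
            (4 * (α / (α - 1))) ^ (-(α / (2 - α / (α - 1)))) * fnorm A ^ α)
        lam mu := by
  classical
  have hα0 : (0:ℝ) < α := by linarith
  have hα1 : (0:ℝ) < α - 1 := by linarith
  have hα2 : (0:ℝ) < α - 2 := by linarith
  have hne1 : α - 1 ≠ 0 := ne_of_gt hα1
  have hne2 : α - 2 ≠ 0 := ne_of_gt hα2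
  have h2m : 2 - α/(α-1) = (α-2)/(α-1) := by field_simp; ring
  have e1 : 1/(2 - α/(α-1)) = (α-1)/(α-2) := by rw [h2m, one_div_div]
  have e2 : (α/(α-1))/(2 - α/(α-1)) = α/(α-2) := by
    rw [h2m]; field_simp
  have e3 : α/(2 - α/(α-1)) = α*(α-1)/(α-2) := by
    rw [h2m]; field_simp
  rw [e1] at hlow hhigh
  rw [e2, e3]
  set β := α/(α-2) with hβdef
  set a' := α/(α-1) with ha'def
  set γ := α*(α-1)/(α-2) with hγdef
  set q := (α-1)/(α-2) with hqdef
  have hβpos : 0 < β := by rw [hβdef]; positivity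
  have ha'pos : 0 < a' := by rw [ha'def]; positivity
  have ha'gt1 : 1 < a' := by rw [ha'def, lt_div_iff₀ hα1]; linarith
  have ha'le2 : a' ≤ 2 := by rw [ha'def, div_le_iff₀ hα1]; linarith
  have hqpos : 0 < q := by rw [hqdef]; positivity
  set L := fnorm lam with hLdef
  set U := fnorm mu with hUdef
  have hL0 : 0 ≤ L := Real.sqrt_nonneg _
  have hU0 : 0 ≤ U := Real.sqrt_nonneg _
  set Q := (3:ℝ) ^ (β/2) with hQdef
  set P := (3:ℝ) ^ β with hPdef
  have h3 : (0:ℝ) < 3 := by norm_num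
  have hP1 : 1 ≤ P := by
    rw [hPdef]
    calc (1:ℝ) = 3 ^ (0:ℝ) := (Real.rpow_zero 3).symm
    _ ≤ 3 ^ β := Real.rpow_le_rpow_of_exponent_le (by norm_num) hβpos.le
  have hQ1 : 1 ≤ Q := by
    rw [hQdef]
    calc (1:ℝ) = 3 ^ (0:ℝ) := (Real.rpow_zero 3).symm
    _ ≤ 3 ^ (β/2) := Real.rpow_le_rpow_of_exponent_le (by norm_num) (by positivity)
  have hQ0 : 0 < Q := lt_of_lt_of_le one_pos hQ1
  have hP0 : 0 < P := lt_of_lt_of_le one_pos hP1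
  have hQP : Q * Q = P := by
    rw [hQdef, hPdef, ← Real.rpow_add h3]
    congr 1; ring
  set W := 4 * a' with hWdef
  have hW0 : 0 < W := by rw [hWdef]; positivity
  have hW1 : 1 ≤ W := by rw [hWdef]; linarith
  set D := W ^ (-β) with hDdef
  have hD0 : 0 < D := Real.rpow_pos_of_pos hW0 _
  set E := α * 2^(α/2) * 16 * P with hEdef
  have h2a : (2:ℝ) ≤ 2 ^ (α/2) := by
    calc (2:ℝ) = 2 ^ (1:ℝ) := (Real.rpow_one 2).symm
    _ ≤ 2 ^ (α/2) := Real.rpow_le_rpow_of_exponent_le (by norm_num) (by linarith)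
  have h4 : (4:ℝ) ≤ α * 2^(α/2) := by
    nlinarith [mul_le_mul hα.le h2a (by norm_num : (0:ℝ) ≤ 2) hα0.le]
  have hE64 : 64 ≤ E := by
    have hx : (64:ℝ) ≤ α * 2^(α/2) * 16 := by linarith
    rw [hEdef]
    calc (64:ℝ) = 64 * 1 := by ring
    _ ≤ (α * 2^(α/2) * 16) * P := mul_le_mul hx hP1 (by norm_num) (by linarith)
  have hE0 : 0 < E := by linarith
  have hEinv : E⁻¹ ≤ 1/64 := by
    rw [show (1:ℝ)/64 = 64⁻¹ by norm_num]
    exact inv_anti₀ (by norm_num) hE64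
  have hEinv0 : 0 ≤ E⁻¹ := by positivity
  -- row selection
  have hS0 : (0:ℝ) ≤ ∑ i, ∑ j, (mu i j)^2 := by positivity
  have hU2 : U^2 = ∑ i, ∑ j, (mu i j)^2 := by
    rw [hUdef]; simp only [fnorm]; exact Real.sq_sqrt hS0
  have hrow : ∃ i : Fin 3, U^2/3 ≤ ∑ j, (mu i j)^2 := by
    by_contra h
    push_neg at h
    have hlt : ∑ i, ∑ j, (mu i j)^2 < ∑ _i : Fin 3, U^2/3 :=
      Finset.sum_lt_sum_of_nonempty ⟨0, Finset.mem_univ 0⟩ (fun i _ => h i)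
    rw [Finset.sum_const, Finset.card_univ, Fintype.card_fin, nsmul_eq_mul] at hlt
    rw [← hU2] at hlt
    linarith
  obtain ⟨i, hrowi⟩ := hrow
  set R2 := ∑ j, (mu i j)^2 with hR2def
  have hR20 : 0 ≤ R2 := by rw [hR2def]; positivity
  set R := Real.sqrt R2 with hRdef
  have hRsq : R^2 = R2 := Real.sq_sqrt hR20
  simp only [gH]
  rcases eq_or_lt_of_le hU0 with hUz | hUpos
  · -- degenerate case U = 0, then L = 0 and both sides are 0
    have hc : 0 < 1/(4*Q) := by positivity
    have hLq0 : L ^ q = 0 := by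
      have h1 : (1/(4*Q)) * L^q ≤ (1/(4*Q)) * 0 := by
        rw [mul_zero]; rw [← hUz] at hlow; exact hlow
      have h2 : L ^ q ≤ 0 := le_of_mul_le_mul_left h1 hc
      exact le_antisymm h2 (Real.rpow_nonneg hL0 q)
    have hLz : L = 0 := by
      rcases eq_or_lt_of_le hL0 with h|h
      · exact h.symm
      · exact absurd hLq0 (Real.rpow_pos_of_pos h q).ne'
    refine le_trans ?_ (le_iSup _ (fun _ _ => (0:ℝ)))
    apply EReal.coe_le_coe_iff.mpr
    have hv : dotM (fun _ _ => (0:ℝ)) mu + dotM lam (Tmap fun _ _ => (0:ℝ)) -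
        E⁻¹ * W ^ (-γ) * fnorm (fun _ _ => (0:ℝ)) ^ α = 0 := by
      simp [dotM, Tmap, fnorm, Real.zero_rpow hα0.ne']
    rw [hv, hLz, ← hUz, Real.zero_rpow hβpos.ne', Real.zero_rpow ha'pos.ne']
    norm_num
  · -- main case U > 0
    have hR2pos : 0 < R2 := lt_of_lt_of_le (by positivity) hrowi
    have hRpos : 0 < R := Real.sqrt_pos.mpr hR2pos
    have hRne : R ≠ 0 := hRpos.ne'
    set s := D * U ^ (1/(α-1)) with hsdef
    have hs0 : 0 < s := mul_pos hD0 (Real.rpow_pos_of_pos hUpos _)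
    set t := s / R with htdef
    have ht0 : 0 ≤ t := by positivity
    set A₀ : M33 := fun B j => if B = i then t * mu B j else 0 with hA₀
    have hdot : dotM A₀ mu = t * R2 := by
      simp only [dotM, hA₀]
      rw [Finset.sum_eq_single i]
      · calc ∑ j, (if i = i then t * mu i j else 0) * mu i j
            = ∑ j, t * (mu i j)^2 := by
              apply Finset.sum_congr rfl; intro j _; rw [if_pos rfl]; ring
        _ = t * R2 := by rw [hR2def, Finset.mul_sum]
      · intro b _ hb
        apply Finset.sum_eq_zero; intro j _; rw [if_neg hb]; ring
      · intro h; exact absurd (Finset.mem_univ i) h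
    have hTz : dotM lam (Tmap A₀) = 0 := by
      have hT : ∀ Z p, Tmap A₀ Z p = 0 := by
        intro Z p
        simp only [Tmap]
        apply Finset.sum_eq_zero; intro qq _
        apply Finset.sum_eq_zero; intro r _
        apply Finset.sum_eq_zero; intro B _
        apply Finset.sum_eq_zero; intro C _
        by_cases hB : B = i
        · by_cases hC : C = i
          · rw [hB, hC]
            have heps : eps Z i i = 0 := by simp [eps]
            rw [heps]; ring
          · have hz : A₀ C r = 0 := by simp only [hA₀]; rw [if_neg hC]
            rw [hz]; ring
        · have hz : A₀ B qq = 0 := by simp only [hA₀]; rw [if_neg hB]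
          rw [hz]; ring
      simp only [dotM]
      apply Finset.sum_eq_zero; intro Z _
      apply Finset.sum_eq_zero; intro p _
      rw [hT]; ring
    have hfn : fnorm A₀ = s := by
      have h1 : ∑ B, ∑ j, (A₀ B j)^2 = t^2 * R2 := by
        simp only [hA₀]
        rw [Finset.sum_eq_single i]
        · calc ∑ j, (if i = i then t * mu i j else 0)^2
              = ∑ j, t^2 * (mu i j)^2 := by
                apply Finset.sum_congr rfl; intro j _; rw [if_pos rfl]; ring
          _ = t^2 * R2 := by rw [hR2def, Finset.mul_sum]
        · intro b _ hb
          apply Finset.sum_eq_zero; intro j _; rw [if_neg hb]; ring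
        · intro h; exact absurd (Finset.mem_univ i) h
      simp only [fnorm]
      rw [h1, Real.sqrt_mul (sq_nonneg t), Real.sqrt_sq ht0, ← hRdef, htdef]
      field_simp
    have hval : dotM A₀ mu + dotM lam (Tmap A₀) - E⁻¹ * W ^ (-γ) * fnorm A₀ ^ α
        = s * R - E⁻¹ * W ^ (-γ) * s ^ α := by
      rw [hdot, hTz, hfn, add_zero]
      congr 1
      rw [htdef, ← hRsq]
      field_simp
    refine le_trans (EReal.coe_le_coe_iff.mpr ?_)
      (le_iSup (fun A : M33 =>
        ((dotM A mu + dotM lam (Tmap A) - E⁻¹ * W ^ (-γ) * fnorm A ^ α : ℝ) : EReal)) A₀)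
    rw [hval]
    -- real inequality
    have hUa'pos : 0 < U ^ a' := Real.rpow_pos_of_pos hUpos _
    have hlow' : L ^ q ≤ 4*Q*U := by
      have h := mul_le_mul_of_nonneg_left hlow (by positivity : (0:ℝ) ≤ 4*Q)
      calc L^q = 4*Q*((1/(4*Q))*L^q) := by field_simp
      _ ≤ 4*Q*U := h
    have hq_a' : q * a' = β := by
      rw [hqdef, ha'def, hβdef]; field_simp
    have hLβ : L ^ β ≤ 16*P*U^a' := by
      have h1 : (L^q)^a' = L ^ β := by rw [← Real.rpow_mul hL0, hq_a']
      have h2 : (L^q)^a' ≤ (4*Q*U)^a' :=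
        Real.rpow_le_rpow (Real.rpow_nonneg hL0 q) hlow' ha'pos.le
      have h3 : (4*Q*U)^a' = (4*Q)^a' * U^a' := Real.mul_rpow (by positivity) hU0
      have h4 : (4*Q)^a' ≤ (4*Q)^(2:ℝ) :=
        Real.rpow_le_rpow_of_exponent_le (by linarith) ha'le2
      have h5 : (4*Q)^(2:ℝ) = 16*P := by
        rw [show ((2:ℝ) = ((2:ℕ):ℝ)) by norm_num, Real.rpow_natCast]
        rw [← hQP]; ring
      calc L^β = (L^q)^a' := h1.symm
      _ ≤ (4*Q*U)^a' := h2
      _ = (4*Q)^a' * U^a' := h3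
      _ ≤ (4*Q)^(2:ℝ) * U^a' := mul_le_mul_of_nonneg_right h4 (Real.rpow_nonneg hU0 _)
      _ = 16*P*U^a' := by rw [h5]
    have hPU : 1 * U^a' ≤ P * U^a' := mul_le_mul_of_nonneg_right hP1 hUa'pos.le
    have hsum32 : L^β + U^a' ≤ 32*P*U^a' := by
      have h0 : 0 < P * U^a' := mul_pos hP0 hUa'pos
      linarith only [hLβ, hPU, h0]
    have hLHS : (1/(32*16*P)) * D * (L^β + U^a') ≤ (1/16) * (D * U^a') := by
      calc (1/(32*16*P)) * D * (L^β + U^a')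
          ≤ (1/(32*16*P)) * D * (32*P*U^a') := by
            apply mul_le_mul_of_nonneg_left hsum32 (by positivity)
      _ = (1/16) * (D * U^a') := by field_simp
    have hsU : s * U = D * U^a' := by
      have hexp : 1/(α-1) + 1 = a' := by rw [ha'def]; field_simp; ring
      rw [hsdef, mul_assoc, ← Real.rpow_add_one hUpos.ne', hexp]
    have hRlow : U / Real.sqrt 3 ≤ R := by
      have h1 : Real.sqrt (U^2/3) ≤ R := by
        rw [hRdef]; exact Real.sqrt_le_sqrt hrowi
      have h2 : Real.sqrt (U^2/3) = U / Real.sqrt 3 := by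
        rw [show U^2/3 = U^2 * (1/3) by ring, Real.sqrt_mul (sq_nonneg U),
          Real.sqrt_sq hU0]
        rw [show (1:ℝ)/3 = 3⁻¹ by norm_num, Real.sqrt_inv]
        rw [div_eq_mul_inv]
      rw [← h2]; exact h1
    have hs3 : Real.sqrt 3 ≤ 2 := by
      nlinarith only [Real.sq_sqrt h3.le, Real.sqrt_nonneg 3]
    have hs3pos : 0 < Real.sqrt 3 := Real.sqrt_pos.mpr h3
    have hsR : (1/2) * (D * U^a') ≤ s * R := by
      calc (1/2)*(D*U^a') = (s*U)/2 := by rw [hsU]; ring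
      _ ≤ (s*U)/Real.sqrt 3 := by
          apply div_le_div_of_nonneg_left (by positivity) hs3pos hs3
      _ = s * (U / Real.sqrt 3) := by ring
      _ ≤ s * R := mul_le_mul_of_nonneg_left hRlow hs0.le
    have hsα_eq : s ^ α = W^(-(β*α)) * U^a' := by
      rw [hsdef, Real.mul_rpow hD0.le (Real.rpow_nonneg hU0 _)]
      congr 1
      · rw [hDdef, ← Real.rpow_mul hW0.le]
        congr 1; ring
      · rw [← Real.rpow_mul hU0]
        congr 1; rw [ha'def]; ring
    have hW_eq : W^(-γ) * W^(-(β*α)) = D * W^(-(2*β*(α-1))) := by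
      rw [hDdef, ← Real.rpow_add hW0, ← Real.rpow_add hW0]
      congr 1
      rw [hγdef, hβdef]; field_simp; ring
    have hWle1 : W^(-(2*β*(α-1))) ≤ 1 :=
      Real.rpow_le_one_of_one_le_of_nonpos hW1
        (neg_nonpos.mpr (mul_pos (mul_pos two_pos hβpos) hα1).le)
    have hW2ge0 : 0 ≤ W^(-(2*β*(α-1))) := Real.rpow_nonneg hW0.le _
    have hsα : E⁻¹ * W^(-γ) * s^α ≤ (1/64) * (D * U^a') := by
      have heq : E⁻¹ * W^(-γ) * s^α = (E⁻¹ * W^(-(2*β*(α-1)))) * (D * U^a') := by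
        rw [hsα_eq, show E⁻¹ * W^(-γ) * (W^(-(β*α)) * U^a')
            = E⁻¹ * (W^(-γ) * W^(-(β*α))) * U^a' by ring, hW_eq]
        ring
      rw [heq]
      have h1 : E⁻¹ * W^(-(2*β*(α-1))) ≤ 1/64 := by
        calc E⁻¹ * W^(-(2*β*(α-1))) ≤ E⁻¹ * 1 :=
              mul_le_mul_of_nonneg_left hWle1 hEinv0
        _ = E⁻¹ := mul_one _
        _ ≤ 1/64 := hEinv
      exact mul_le_mul_of_nonneg_right h1 (by positivity)
    have hDU0 : 0 ≤ D * U^a' := by positivity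
    linarith only [hLHS, hsR, hsα, hDU0]
end
end

section
/- Let H(A) = (1/2) |A|². If λ, μ ∈ ℝ^{3×3} satisfy |λ| > 3/2, then g_H(λ, μ) = +∞; that is, for every M ∈ ℝ there exists A ∈ ℝ^{3×3} with A:μ + λ:T(A) − (1/2)|A|² ≥ M. -/
open scoped BigOperators

noncomputable section

/-!
`T(A)` is twice the cofactor matrix of `A`. Pick an entry with `λ_{ij}² > 1/4` and give `A`
the entries `t` and `2 λ_{ij} t` on the diagonal of the minor complementary to `(i, j)`
(`2 λ_{ij}` maximises `2 b λ_{ij} - b²/2`). Then `λ : T(A) = 4 λ_{ij}² t²` and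
`|A|²/2 = (1/2 + 2 λ_{ij}²) t²`, so the objective is a quadratic in `t` with leading
coefficient `2 λ_{ij}² - 1/2 > 0`, hence unbounded above.
-/

lemma fnorm_sq (A : M33) : fnorm A ^ 2 = ∑ i, ∑ j, A i j ^ 2 :=
  Real.sq_sqrt <| Finset.sum_nonneg fun _ _ => Finset.sum_nonneg fun _ _ => sq_nonneg _

lemma exists_sq_gt_of_lt_fnorm (lam : M33) (hlam : 3 / 2 < fnorm lam) :
    ∃ i j, 1 / 4 < lam i j ^ 2 := by
  by_contra! h
  have hsum : ∑ i, ∑ j, lam i j ^ 2 ≤ 9 / 4 := by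
    calc ∑ i, ∑ j, lam i j ^ 2 ≤ ∑ _i : Fin 3, ∑ _j : Fin 3, (1 / 4 : ℝ) :=
          Finset.sum_le_sum fun i _ => Finset.sum_le_sum fun j _ => h i j
      _ = 9 / 4 := by norm_num
  nlinarith [fnorm_sq lam]

def twoEntry (i j : Fin 3) (a b : ℝ) : M33 :=
  fun B q => if B = i + 1 ∧ q = j + 1 then a else if B = i + 2 ∧ q = j + 2 then b else 0

lemma dotM_twoEntry (i j : Fin 3) (a b : ℝ) (mu : M33) :
    dotM (twoEntry i j a b) mu = a * mu (i + 1) (j + 1) + b * mu (i + 2) (j + 2) := by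
  fin_cases i <;> fin_cases j <;> simp [dotM, twoEntry, Fin.sum_univ_three] <;> ring

lemma dotM_Tmap_twoEntry (i j : Fin 3) (a b : ℝ) (lam : M33) :
    dotM lam (Tmap (twoEntry i j a b)) = 2 * a * b * lam i j := by
  fin_cases i <;> fin_cases j <;> simp [dotM, Tmap, twoEntry, eps, Fin.sum_univ_three] <;> ring

lemma fnorm_twoEntry_sq (i j : Fin 3) (a b : ℝ) :
    fnorm (twoEntry i j a b) ^ 2 = a ^ 2 + b ^ 2 := by
  rw [fnorm_sq]
  fin_cases i <;> fin_cases j <;> simp [twoEntry, Fin.sum_univ_three] <;> ring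

lemma exists_le_mul_add_mul_sq (c : ℝ) {δ : ℝ} (hδ : 0 < δ) (M : ℝ) :
    ∃ t : ℝ, M ≤ c * t + δ * t ^ 2 := by
  set t := (|M| + |c|) / δ + 1
  have ht : 1 ≤ t := by
    have : 0 ≤ (|M| + |c|) / δ := by positivity
    linarith
  have hδt : |M| + |c| ≤ δ * t := by
    rw [mul_add, mul_div_cancel₀ _ hδ.ne']
    linarith
  refine ⟨t, ?_⟩
  calc M ≤ |M| := le_abs_self M
    _ ≤ t * |M| := le_mul_of_one_le_left (abs_nonneg M) ht
    _ ≤ t * (δ * t + c) := by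
        gcongr
        linarith [neg_abs_le c]
    _ = c * t + δ * t ^ 2 := by ring

lemma EReal.iSup_coe_eq_top_of_forall_exists_le {ι : Sort*} (f : ι → ℝ)
    (hf : ∀ M, ∃ x, M ≤ f x) : ⨆ x, (f x : EReal) = ⊤ := by
  refine iSup_eq_top.2 fun b hb => ?_
  obtain ⟨x, hx⟩ := hf (b.toReal + 1)
  refine ⟨x, (EReal.le_coe_toReal hb.ne).trans_lt ?_⟩
  exact_mod_cast (lt_add_one b.toReal).trans_le hx

theorem stmt9 (lam mu : M33) (hlam : 3 / 2 < fnorm lam) :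
    gH (fun A => (1 / 2) * fnorm A ^ 2) lam mu = ⊤ ∧
    ∀ Mbound : ℝ, ∃ A : M33,
      Mbound ≤ dotM A mu + dotM lam (Tmap A) - (1 / 2) * fnorm A ^ 2 := by
  obtain ⟨i, j, hij⟩ := exists_sq_gt_of_lt_fnorm lam hlam
  have unbounded : ∀ Mbound : ℝ, ∃ A : M33,
      Mbound ≤ dotM A mu + dotM lam (Tmap A) - (1 / 2) * fnorm A ^ 2 := by
    intro M
    obtain ⟨t, ht⟩ := exists_le_mul_add_mul_sq (mu (i + 1) (j + 1) + 2 * lam i j * mu (i + 2) (j + 2))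
      (show 0 < 2 * lam i j ^ 2 - 1 / 2 by linarith) M
    refine ⟨twoEntry i j t (2 * lam i j * t), ?_⟩
    rw [dotM_twoEntry, dotM_Tmap_twoEntry, fnorm_twoEntry_sq]
    linear_combination ht
  exact ⟨EReal.iSup_coe_eq_top_of_forall_exists_le _ unbounded, unbounded⟩
end
end
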